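/- arXiv:2302.04175 — 4 statements merged into one kernel-verified Lean document; each statement's English description precedes it below -/
import Mathlib

section
/- Correctness of the exclusion strategy for capability-set equivalence (Proposition 1). Let Cap be a type with decidable equality and let Y : Finset Cap be nonempty. Consider the NFA over the alphabet Finset Cap whose state type is Option {y // y ∈ Y}, whose set of start states is {none}, all of whose states are accepting, and whose transition relation on reading a letter a : Finset Cap is: from none to none whenever no element of Y belongs to a; from none to some y (for each y ∈ Y) whenever y ∉ a; and from some y to some y whenever y ∉ a. Then for every word w : List (Finset Cap), this NFA accepts w if and only if ¬ (↑Y ⊆ ↑(CSet w)), i.e. if and only if some element of Y occurs in no entry of w. -/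
/-- The cumulative capability set of a capability history. -/
def CSet {Cap : Type*} [DecidableEq Cap] (w : List (Finset Cap)) : Finset Cap :=
  w.foldl (· ∪ ·) ∅

/-- The exclusion NFA for capability-set equivalence. -/
def exclNFA {Cap : Type*} [DecidableEq Cap] (Y : Finset Cap) :
    NFA (Finset Cap) (Option {y // y ∈ Y}) where
  step := fun s a =>
    match s with
    | none => {q | (q = none ∧ ∀ y ∈ Y, y ∉ a) ∨ ∃ y : {y // y ∈ Y}, q = some y ∧ (y : Cap) ∉ a}
    | some y => {q | q = some y ∧ (y : Cap) ∉ a}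
  start := {none}
  accept := Set.univ

/-!
The state `none` survives exactly as long as no letter meets `Y`, and the state `some y` is
reached after a nonempty word exactly when `y` occurs in none of its letters: the automaton
guesses at the first letter which element of `Y` is never granted. Since every state is
accepting, `w` is accepted iff one of these states is reachable; the state `none` is only
needed for the empty word, and then it witnesses any element of the nonempty set `Y`.
-/

theorem Finset.mem_foldl_union {α : Type*} [DecidableEq α] (w : List (Finset α)) (s : Finset α)
    (x : α) : x ∈ w.foldl (· ∪ ·) s ↔ x ∈ s ∨ ∃ a ∈ w, x ∈ a := by
  induction w generalizing s with
  | nil => simp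
  | cons b w ih => simp [ih, or_assoc]

section CSet

variable {Cap : Type*} [DecidableEq Cap]

theorem mem_CSet {w : List (Finset Cap)} {x : Cap} : x ∈ CSet w ↔ ∃ a ∈ w, x ∈ a := by
  simp [CSet, Finset.mem_foldl_union]

theorem not_coe_subset_CSet_iff {Y : Finset Cap} {w : List (Finset Cap)} :
    ¬ ((Y : Set Cap) ⊆ CSet w) ↔ ∃ y ∈ Y, ∀ a ∈ w, y ∉ a := by
  simp [Set.subset_def, mem_CSet]

end CSet

namespace exclNFA

variable {Cap : Type*} [DecidableEq Cap] {Y : Finset Cap}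

theorem none_mem_step {q : Option {y // y ∈ Y}} {a : Finset Cap} :
    none ∈ (exclNFA Y).step q a ↔ q = none ∧ ∀ y ∈ Y, y ∉ a := by
  cases q <;> simp [exclNFA]

theorem some_mem_step {q : Option {y // y ∈ Y}} {y : {y // y ∈ Y}} {a : Finset Cap} :
    some y ∈ (exclNFA Y).step q a ↔ (q = none ∨ q = some y) ∧ (y : Cap) ∉ a := by
  cases q with
  | none => simp [exclNFA]
  | some z =>
    simp only [exclNFA, Set.mem_ofPred_eq, Option.some.injEq, Option.some_ne_none, false_or]
    grind

theorem none_mem_eval {w : List (Finset Cap)} :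
    none ∈ (exclNFA Y).eval w ↔ ∀ a ∈ w, ∀ y ∈ Y, y ∉ a := by
  induction w using List.reverseRecOn with
  | nil => simp [exclNFA]
  | append_singleton w b ih =>
    simp [NFA.eval_append_singleton, NFA.mem_stepSet, none_mem_step, ih, or_imp, forall_and]

theorem some_mem_eval {w : List (Finset Cap)} {y : {y // y ∈ Y}} :
    some y ∈ (exclNFA Y).eval w ↔ w ≠ [] ∧ ∀ a ∈ w, (y : Cap) ∉ a := by
  induction w using List.reverseRecOn with
  | nil => simp [exclNFA]
  | append_singleton w b ih =>
    have hstep : some y ∈ (exclNFA Y).eval (w ++ [b]) ↔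
        (none ∈ (exclNFA Y).eval w ∨ some y ∈ (exclNFA Y).eval w) ∧ (y : Cap) ∉ b := by
      simp only [NFA.eval_append_singleton, NFA.mem_stepSet, some_mem_step]
      grind
    rw [hstep, none_mem_eval, ih]
    rcases eq_or_ne w [] with rfl | hw
    · simp
    · have hy : (∀ a ∈ w, ∀ z ∈ Y, z ∉ a) → ∀ a ∈ w, (y : Cap) ∉ a := fun h a ha => h a ha y y.2
      simp only [ne_eq, List.append_eq_nil_iff, List.cons_ne_nil, and_false, not_false_eq_true,
        hw, true_and, List.mem_append, List.mem_singleton, or_imp, forall_and, forall_eq]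
      tauto

theorem mem_accepts {w : List (Finset Cap)} :
    w ∈ (exclNFA Y).accepts ↔ ∃ q, q ∈ (exclNFA Y).eval w :=
  ⟨fun ⟨q, _, hq⟩ => ⟨q, hq⟩, fun ⟨q, hq⟩ => ⟨q, trivial, hq⟩⟩

end exclNFA

theorem exclNFA_correct {Cap : Type*} [DecidableEq Cap] (Y : Finset Cap) (hY : Y.Nonempty)
    (w : List (Finset Cap)) :
    w ∈ (exclNFA Y).accepts ↔ ¬ ((Y : Set Cap) ⊆ ((CSet w : Finset Cap) : Set Cap)) := by
  rw [exclNFA.mem_accepts, not_coe_subset_CSet_iff]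
  constructor
  · rintro ⟨none | y, hq⟩
    · obtain ⟨y, hy⟩ := hY
      exact ⟨y, hy, fun a ha => exclNFA.none_mem_eval.1 hq a ha y hy⟩
    · exact ⟨y, y.2, (exclNFA.some_mem_eval.1 hq).2⟩
  · rintro ⟨y, hy, hw⟩
    rcases eq_or_ne w [] with rfl | hne
    · exact ⟨none, exclNFA.none_mem_eval.2 (by simp)⟩
    · exact ⟨some ⟨y, hy⟩, exclNFA.some_mem_eval.2 ⟨hne, hw⟩⟩
end

section
/- Language of the exclusion automaton for capability-order equivalence. Let Cap be a type with decidable equality and let L : List (Finset Cap) be nonempty with no two consecutive entries equal (List.Chain' (· ≠ ·) L); write k = L.length and Y_j for the j-th entry of L (1-indexed). Consider the DFA over the alphabet Finset Cap with state type Option (Fin (k+1)) (none is a rejecting sink), start state some 0, accepting states all states of the form some i, and transition function: at state some i with 0 ≤ i ≤ k−1, reading Y_{i+1} leads to some (i+1) if i+1 < k and to none if i+1 = k; reading Y_i (only when i ≥ 1) stays at some i; reading any other letter leads to some k; at state some k every letter loops to some k; at none every letter stays at none. Then for every word w : List (Finset Cap), this DFA accepts w if and only if L is NOT a prefix of COrd(w)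 = List.destutter (· ≠ ·) w. -/
/-- Transition function of the exclusion DFA for capability-order equivalence.
States `some i` for `i : Fin (L.length + 1)` track progress through `L`; `none` is a
rejecting sink. -/
def cordStep {Cap : Type*} [DecidableEq Cap] (L : List (Finset Cap)) :
    Option (Fin (L.length + 1)) → Finset Cap → Option (Fin (L.length + 1))
  | none, _ => none
  | some i, a =>
    if h : (i : ℕ) < L.length then
      -- reading Y_{i+1} (the (i+1)-th entry, 1-indexed)
      if a = L.get ⟨i, h⟩ then
        if h' : (i : ℕ) + 1 < L.length then some ⟨(i : ℕ) + 1, by omega⟩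
        else none
      else if h0 : 0 < (i : ℕ) then
        -- reading Y_i (the i-th entry, 1-indexed), only when i ≥ 1: stay
        if a = L.get ⟨(i : ℕ) - 1, by omega⟩ then some i
        -- any other letter: go to the accepting sink `some k`
        else some ⟨L.length, by omega⟩
      else some ⟨L.length, by omega⟩
    else -- i = k: every letter loops
      some i

/-- The exclusion DFA for capability-order equivalence. -/
def cordDFA {Cap : Type*} [DecidableEq Cap] (L : List (Finset Cap)) :
    DFA (Finset Cap) (Option (Fin (L.length + 1))) where
  step := cordStep L
  start := some ⟨0, by omega⟩
  accept := Set.range some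

/-!
The state reached on a word `w` depends only on `d = COrd(w)`: it is `none` once `L` is a
prefix of `d`, `some |d|` while `d` is a proper prefix of `L`, and `some k` once `d` and `L`
have diverged. Appending a letter `a` to `w` appends `a` to `d` exactly when `a` differs from
the last letter of `d`, and each transition of the automaton matches this update; since
consecutive entries of `L` differ, reading `Y_{i+1}` after the prefix `Y_1 ⋯ Y_i` always
extends `d`.
-/

namespace List

variable {α : Type*}

theorem destutter'_append_singleton (R : α → α → Prop) [DecidableRel R] (b a : α) :
    ∀ l : List α, (l ++ [a]).destutter' R b =
      if R ((l.destutter' R b).getLast (destutter'_ne_nil l R)) a then l.destutter' R b ++ [a]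
      else l.destutter' R b
  | [] => destutter'_singleton R
  | c :: l => by
    by_cases h : R b c
    · simp only [cons_append, destutter'_cons_pos _ h, destutter'_append_singleton R c a l,
        getLast_cons (destutter'_ne_nil l R)]
      split_ifs <;> rfl
    · simp only [cons_append, destutter'_cons_neg _ h, destutter'_append_singleton R b a l]

theorem destutter_ne_append_singleton [DecidableEq α] (l : List α) (a : α) :
    (l ++ [a]).destutter (· ≠ ·) =
      if (l.destutter (· ≠ ·)).getLast? = some a then l.destutter (· ≠ ·)
      else l.destutter (· ≠ ·) ++ [a] := by
  cases l with
  | nil => simp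
  | cons b l =>
    rw [cons_append, destutter_cons', destutter_cons', destutter'_append_singleton,
      getLast?_eq_some_getLast (destutter'_ne_nil l _)]
    simp only [Option.some_inj, ne_eq, ite_not]

theorem take_append_singleton_prefix_iff {L : List α} {i : ℕ} (hi : i < L.length) (a : α) :
    L.take i ++ [a] <+: L ↔ a = L[i] := by
  have hL : L = L.take i ++ L[i] :: L.drop (i + 1) := by
    rw [← drop_eq_getElem_cons hi, take_append_drop]
  calc L.take i ++ [a] <+: L ↔ L.take i ++ [a] <+: L.take i ++ L[i] :: L.drop (i + 1) := by
        rw [← hL]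
    _ ↔ a = L[i] := by simp only [prefix_append_right_inj, cons_prefix_cons, nil_prefix, and_true]

theorem getLast?_take_of_pos {L : List α} {i : ℕ} (h0 : 0 < i) (hi : i ≤ L.length) :
    (L.take i).getLast? = some (L[i - 1]'(by omega)) := by
  simp [getLast?_take, h0.ne', getElem?_eq_getElem (show i - 1 < L.length by omega)]

end List

section Phase

variable {α : Type*} [DecidableEq α]

def cordPhase (L d : List α) : Option (Fin (L.length + 1)) :=
  if L <+: d then none
  else if h : d <+: L then some ⟨d.length, Nat.lt_succ_of_le h.length_le⟩
  else some (Fin.last _)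

theorem cordPhase_of_prefix {L d : List α} (h : L <+: d) : cordPhase L d = none :=
  if_pos h

theorem cordPhase_of_incomparable {L d : List α} (h₁ : ¬ L <+: d) (h₂ : ¬ d <+: L) :
    cordPhase L d = some (Fin.last _) := by
  simp [cordPhase, h₁, h₂]

theorem cordPhase_take {L : List α} {i : ℕ} (hi : i < L.length) :
    cordPhase L (L.take i) = some ⟨i, by omega⟩ := by
  have hL : ¬ L <+: L.take i := fun h => by simpa using h.length_le.trans_lt' hi
  simp [cordPhase, hL, List.take_prefix, Nat.min_eq_left hi.le]

theorem cordPhase_take_append_of_ne {L : List α} {i : ℕ} (hi : i < L.length) {a : α}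
    (ha : a ≠ L[i]) : cordPhase L (L.take i ++ [a]) = some (Fin.last _) := by
  have h₂ : ¬ L.take i ++ [a] <+: L := by rwa [List.take_append_singleton_prefix_iff hi]
  refine cordPhase_of_incomparable ?_ h₂
  rw [List.prefix_concat_iff]
  rintro (h | h)
  · exact h₂ (h ▸ List.prefix_rfl)
  · simpa using h.length_le.trans_lt' hi

end Phase

section Step

variable {Cap : Type*} [DecidableEq Cap] {L : List (Finset Cap)}

theorem cordStep_last (a : Finset Cap) : cordStep L (some (Fin.last _)) a = some (Fin.last _) := by
  simp [cordStep]

theorem cordStep_take (hL : L.IsChain (· ≠ ·)) {i : ℕ} (hi : i < L.length) (a : Finset Cap) :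
    cordStep L (some ⟨i, by omega⟩) a =
      cordPhase L (if (L.take i).getLast? = some a then L.take i else L.take i ++ [a]) := by
  by_cases ha : a = L[i]
  · subst ha
    have hnew : (L.take i).getLast? ≠ some L[i] := by
      rcases i.eq_zero_or_pos with rfl | h0
      · simp
      · have := hL.getElem (i - 1) (by omega)
        simp only [Nat.sub_add_cancel h0] at this
        rwa [List.getLast?_take_of_pos h0 hi.le, Ne, Option.some_inj]
    rw [if_neg hnew, ← List.take_succ_eq_append_getElem hi]
    by_cases hi' : i + 1 < L.length
    · rw [cordPhase_take hi']
      simp [cordStep, hi, hi']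
    · rw [show i + 1 = L.length by omega, List.take_length, cordPhase_of_prefix List.prefix_rfl]
      simp [cordStep, hi, hi']
  · by_cases hstay : ∃ h : 0 < i, a = L[i - 1]
    · obtain ⟨h0, rfl⟩ := hstay
      rw [if_pos (List.getLast?_take_of_pos h0 hi.le), cordPhase_take hi]
      simp [cordStep, hi, ha, h0]
    · have hlast : (L.take i).getLast? ≠ some a := by
        rcases i.eq_zero_or_pos with rfl | h0
        · simp
        · rw [List.getLast?_take_of_pos h0 hi.le, Ne, Option.some_inj]
          exact fun h => hstay ⟨h0, h.symm⟩
      rw [if_neg hlast, cordPhase_take_append_of_ne hi ha]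
      simp only [cordStep, hi, ha, List.get_eq_getElem, dite_true, if_false]
      split_ifs with h0 h
      exacts [(hstay ⟨h0, h⟩).elim, rfl, rfl]

theorem cordStep_cordPhase (hL : L.IsChain (· ≠ ·)) (d : List (Finset Cap)) (a : Finset Cap) :
    cordStep L (cordPhase L d) a = cordPhase L (if d.getLast? = some a then d else d ++ [a]) := by
  by_cases hLd : L <+: d
  · have : L <+: if d.getLast? = some a then d else d ++ [a] := by
      split_ifs
      exacts [hLd, hLd.trans (List.prefix_append _ _)]
    rw [cordPhase_of_prefix hLd, cordPhase_of_prefix this]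
    rfl
  by_cases hdL : d <+: L
  · obtain ⟨i, hi, rfl⟩ : ∃ i < L.length, d = L.take i :=
      ⟨d.length,
        lt_of_le_of_ne hdL.length_le fun h => hLd (hdL.eq_of_length h ▸ List.prefix_rfl),
        List.prefix_iff_eq_take.mp hdL⟩
    rw [cordPhase_take hi, cordStep_take hL hi]
  · have h₁ : ¬ L <+: d ++ [a] := by
      rw [List.prefix_concat_iff]
      rintro (rfl | h)
      exacts [hdL (List.prefix_append _ _), hLd h]
    have h₂ : ¬ d ++ [a] <+: L := fun h => hdL ((List.prefix_append _ _).trans h)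
    rw [cordPhase_of_incomparable hLd hdL, cordStep_last]
    split_ifs
    exacts [(cordPhase_of_incomparable hLd hdL).symm, (cordPhase_of_incomparable h₁ h₂).symm]

theorem cordDFA_eval (hne : L ≠ []) (hL : L.IsChain (· ≠ ·)) (w : List (Finset Cap)) :
    (cordDFA L).eval w = cordPhase L (w.destutter (· ≠ ·)) := by
  induction w using List.reverseRecOn with
  | nil =>
    have : ¬ L <+: [] := by rwa [List.prefix_nil]
    simp [cordDFA, cordPhase, this]
  | append_singleton w a ih =>
    rw [DFA.eval_append_singleton, ih, List.destutter_ne_append_singleton]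
    exact cordStep_cordPhase hL _ a

end Step

theorem cordDFA_correct {Cap : Type*} [DecidableEq Cap] (L : List (Finset Cap))
    (hne : L ≠ []) (hch : List.Chain' (· ≠ ·) L) (w : List (Finset Cap)) :
    w ∈ (cordDFA L).accepts ↔ ¬ (L <+: List.destutter (· ≠ ·) w) := by
  rw [DFA.mem_accepts, cordDFA_eval hne hch, cordPhase]
  split_ifs <;> simp_all [cordDFA]
end

section
/- Theorem 1 (Composition) instantiated for capability-set equivalence. Let Cap be a type with decidable equality, let M be any NFA over the alphabet Finset Cap (modelling a test strategy), and let Y : Finset Cap be nonempty. Let N be the NFA over Finset Cap with state type Option {y // y ∈ Y}, start states {none}, all states accepting, and transitions on a letter a: none to none when no element of Y belongs to a; none to some y when y ∉ a; some y to some y when y ∉ a. Then the synchronized product NFA of M and N (product states, product starts, product accepts, componentwise transitions on the same letter) accepts a word w : List (Finset Cap) if and only if M accepts w and ¬ (↑Y ⊆ ↑(CSet w)). In particular, the language of the product is exactly the set of histories derivable from M whose cumulative capability set does not contain Y. -/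
/-- The synchronized product of two NFAs over the same alphabet. -/
def NFA.prod {α : Type*} {σ₁ σ₂ : Type*} (M₁ : NFA α σ₁) (M₂ : NFA α σ₂) :
    NFA α (σ₁ × σ₂) where
  step := fun p a => {q | q.1 ∈ M₁.step p.1 a ∧ q.2 ∈ M₂.step p.2 a}
  start := {p | p.1 ∈ M₁.start ∧ p.2 ∈ M₂.start}
  accept := {p | p.1 ∈ M₁.accept ∧ p.2 ∈ M₂.accept}


/-!
The product accepts the intersection of the two languages, so it suffices to show that `exclNFA Y`
accepts exactly the histories missing some `y ∈ Y`. Its run reaches `some y` or stays in `none`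
precisely while `y` has not yet appeared; every state is accepting, so acceptance means that
some run survives. The start state `none` survives exactly when no letter meets `Y`, which
witnesses a missing `y` only because `Y` is nonempty.
-/

namespace NFA

variable {α σ₁ σ₂ : Type*} (M₁ : NFA α σ₁) (M₂ : NFA α σ₂)

theorem stepSet_prod (S₁ : Set σ₁) (S₂ : Set σ₂) (a : α) :
    (M₁.prod M₂).stepSet (S₁ ×ˢ S₂) a = M₁.stepSet S₁ a ×ˢ M₂.stepSet S₂ a := by
  ext ⟨q₁, q₂⟩
  simp only [mem_stepSet, Set.mem_prod, prod, Set.mem_ofPred_eq, Prod.exists]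
  constructor
  · rintro ⟨p₁, p₂, ⟨h₁, h₂⟩, h₁', h₂'⟩
    exact ⟨⟨p₁, h₁, h₁'⟩, ⟨p₂, h₂, h₂'⟩⟩
  · rintro ⟨⟨p₁, h₁, h₁'⟩, ⟨p₂, h₂, h₂'⟩⟩
    exact ⟨p₁, p₂, ⟨h₁, h₂⟩, h₁', h₂'⟩

theorem eval_prod (w : List α) : (M₁.prod M₂).eval w = M₁.eval w ×ˢ M₂.eval w := by
  induction w using List.reverseRecOn with
  | nil => rfl
  | append_singleton w a ih => simp only [eval_append_singleton, ih, stepSet_prod]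

theorem mem_accepts_prod {w : List α} :
    w ∈ (M₁.prod M₂).accepts ↔ w ∈ M₁.accepts ∧ w ∈ M₂.accepts := by
  change (∃ q ∈ (M₁.prod M₂).accept, q ∈ (M₁.prod M₂).eval w) ↔
    (∃ q ∈ M₁.accept, q ∈ M₁.eval w) ∧ ∃ q ∈ M₂.accept, q ∈ M₂.eval w
  rw [eval_prod]
  constructor
  · rintro ⟨q, ⟨h₁, h₂⟩, e₁, e₂⟩
    exact ⟨⟨q.1, h₁, e₁⟩, ⟨q.2, h₂, e₂⟩⟩
  · rintro ⟨⟨q₁, h₁, e₁⟩, ⟨q₂, h₂, e₂⟩⟩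
    exact ⟨(q₁, q₂), ⟨h₁, h₂⟩, e₁, e₂⟩

end NFA

section Exclusion

variable {Cap : Type*} [DecidableEq Cap]

theorem CSet_append_singleton (w : List (Finset Cap)) (a : Finset Cap) :
    CSet (w ++ [a]) = CSet w ∪ a := by
  simp [CSet]

variable {Y : Finset Cap}

theorem exclNFA_some_mem_stepSet {S : Set (Option {y // y ∈ Y})} {a : Finset Cap}
    {y : {y // y ∈ Y}} :
    some y ∈ (exclNFA Y).stepSet S a ↔ (none ∈ S ∨ some y ∈ S) ∧ (y : Cap) ∉ a := by
  rw [NFA.mem_stepSet]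
  constructor
  · rintro ⟨t, ht, hy⟩
    cases t <;> simp_all [exclNFA]
  · rintro ⟨hS | hS, hya⟩
    · exact ⟨none, hS, .inr ⟨y, rfl, hya⟩⟩
    · exact ⟨some y, hS, rfl, hya⟩

theorem exclNFA_some_mem_stepSet_of_none_mem {S : Set (Option {y // y ∈ Y})} {a : Finset Cap}
    (y : {y // y ∈ Y}) (h : none ∈ (exclNFA Y).stepSet S a) :
    some y ∈ (exclNFA Y).stepSet S a := by
  obtain ⟨t, ht, hstep⟩ := NFA.mem_stepSet.1 h
  cases t with
  | none => exact exclNFA_some_mem_stepSet.2 ⟨.inl ht, hstep.elim (·.2 y y.2) (by simp)⟩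
  | some z => simp [exclNFA] at hstep

theorem exclNFA_none_mem_eval_or_some_mem_eval_iff (y : {y // y ∈ Y}) (w : List (Finset Cap)) :
    none ∈ (exclNFA Y).eval w ∨ some y ∈ (exclNFA Y).eval w ↔ (y : Cap) ∉ CSet w := by
  induction w using List.reverseRecOn with
  | nil => simp [NFA.eval_nil, exclNFA, CSet]
  | append_singleton w a ih =>
    rw [NFA.eval_append_singleton, or_iff_right_of_imp (exclNFA_some_mem_stepSet_of_none_mem y),
      exclNFA_some_mem_stepSet, ih, CSet_append_singleton, Finset.mem_union, not_or]

theorem mem_exclNFA_accepts_iff (hY : Y.Nonempty) (w : List (Finset Cap)) :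
    w ∈ (exclNFA Y).accepts ↔ ∃ y ∈ Y, y ∉ CSet w := by
  simp only [NFA.accepts, exclNFA, Set.mem_univ, true_and]
  constructor
  · rintro ⟨q, hq⟩
    cases q with
    | none =>
      obtain ⟨y, hyY⟩ := hY
      exact ⟨y, hyY, (exclNFA_none_mem_eval_or_some_mem_eval_iff ⟨y, hyY⟩ w).1 (.inl hq)⟩
    | some y => exact ⟨y, y.2, (exclNFA_none_mem_eval_or_some_mem_eval_iff y w).1 (.inr hq)⟩
  · rintro ⟨y, hyY, hy⟩
    exact ((exclNFA_none_mem_eval_or_some_mem_eval_iff ⟨y, hyY⟩ w).2 hy).elim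
      (⟨_, ·⟩) (⟨_, ·⟩)

end Exclusion

theorem composition_capability_set {Cap : Type*} [DecidableEq Cap] {σ : Type*}
    (M : NFA (Finset Cap) σ) (Y : Finset Cap) (hY : Y.Nonempty)
    (w : List (Finset Cap)) :
    w ∈ (M.prod (exclNFA Y)).accepts ↔
      w ∈ M.accepts ∧ ¬ ((Y : Set Cap) ⊆ ((CSet w : Finset Cap) : Set Cap)) := by
  rw [NFA.mem_accepts_prod, mem_exclNFA_accepts_iff hY, Finset.coe_subset, Finset.not_subset]
end

section
/- Collapsing preserves the prefix order of histories: for any type α with decidable equality and any lists w₁ w₂ : List α, if w₁ is a prefix of w₂ then List.destutter (· ≠ ·) w₁ is a prefix of List.destutter (· ≠ ·) w₂. In particular, if one capability history is a prefix of another, then the two histories are strong capability-order equivalent (the collapsed order of the first is a prefix of the collapsed order of the second). -/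
lemma destutter'_head_prefix {α : Type*} [DecidableEq α] (a : α) (l : List α) :
    [a] <+: List.destutter' (· ≠ ·) a l := by
  induction l generalizing a with
  | nil => simp [List.destutter']
  | cons b t ih =>
      rw [List.destutter']
      split
      · exact ⟨List.destutter' (· ≠ ·) b t, rfl⟩
      · exact ih a

lemma destutter'_prefix {α : Type*} [DecidableEq α] (a : α) (l₁ l₂ : List α)
    (h : l₁ <+: l₂) :
    List.destutter' (· ≠ ·) a l₁ <+: List.destutter' (· ≠ ·) a l₂ := by
  induction l₁ generalizing a l₂ with
  | nil => simpa [List.destutter'] using destutter'_head_prefix a l₂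
  | cons b t ih =>
      obtain ⟨s, rfl⟩ := h
      rw [List.cons_append, List.destutter', List.destutter']
      split
      · exact (List.cons_prefix_cons).2 ⟨rfl, ih b (t ++ s) ⟨s, rfl⟩⟩
      · exact ih a (t ++ s) ⟨s, rfl⟩

theorem destutter_prefix_of_prefix {α : Type*} [DecidableEq α] (w₁ w₂ : List α)
    (h : w₁ <+: w₂) :
    List.destutter (· ≠ ·) w₁ <+: List.destutter (· ≠ ·) w₂ := by
  cases w₁ with
  | nil => simp [List.destutter]
  | cons a t =>
      obtain ⟨s, rfl⟩ := h
      rw [List.cons_append, List.destutter, List.destutter]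
      exact destutter'_prefix a t (t ++ s) ⟨s, rfl⟩
end
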